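/- Let k ≥ 2, let 0 < α₁ < α₂ < … < α_{k−1} < 1 and p₁, …, p_{k−1} ∈ (0,1] with Σ_{m=1}^{k−1} p_m = 1, and let Y be an integrable real-valued random variable having a unique α_m-quantile for each m = 1,…,k−1. Define the spectral risk measure ρ^φ(Y) := Σ_{m=1}^{k−1} p_m CVaR_{α_m}(Y). Let G_k : ℝ → ℝ be convex with subgradient G_k′ and let G₁, …, G_{k−1} : ℝ → ℝ be such that for every 𝔞_k ∈ ℝ and each m = 1,…,k−1 the map x ↦ G_m(x) − (x p_m/(1−α_m)) G_k′(𝔞_k) is increasing, and assume E|G_m(Y)| < ∞ for all m = 1,…,k. Define, for 𝔞₁ ≤ … ≤ 𝔞_{k−1} and 𝔞_k ∈ ℝ, the scoring function S(𝔞₁, …, 𝔞_{k−1}, 𝔞_k, y) := Σ_{m=1}^{k−1} (1{y ≤ 𝔞_m} − α_m)(G_m(𝔞_m) − G_m(y)) − G_k(𝔞_k) + G_k(y) + G_k′(𝔞_k)[ 𝔞_k + Σ_{m=1}^{k−1} (p_m/(1−α_m))( (1{y > 𝔞_m} − (1−α_m)) 𝔞_m − 1{y > 𝔞_m} y ) ].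 Then S is consistent for the mapping M(Y) = (VaR_{α₁}(Y), …, VaR_{α_{k−1}}(Y), ρ^φ(Y)): E[S(M(Y), Y)] ≤ E[S(𝔞₁, …, 𝔞_k, Y)] for all 𝔞 ∈ ℝ^k with 𝔞₁ ≤ … ≤ 𝔞_{k−1}. -/

import Mathlib

/-!
Write `c = G_k'(𝔞_k)` and `s_m(z, y) = (1{y ≤ z} - α_m)(G_m(z) - G_m(y))`. Since
`1{z < y}(z - y) = -(y - z)⁺`, the score is
`Σ_m [s_m(𝔞_m, y) - c p_m/(1-α_m) ((1-α_m) 𝔞_m + (y - 𝔞_m)⁺)] + G_k(y) - G_k(𝔞_k) + c 𝔞_k`.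
Up to a term `-c p_m y` free of `𝔞`, the `m`-th summand is the generalized piecewise linear
score `(1{y ≤ z} - α_m)(H(z) - H(y))` of the increasing function `H = G_m - c p_m/(1-α_m) id`,
whose expectation is minimal at any `α_m`-quantile. At the true quantiles
`(1-α_m) VaR + E (Y - VaR)⁺ = (1-α_m) CVaR`, by Fubini on the region between the graphs of
the distribution function and of the quantile function, so the tail terms sum to `c ρ^φ(Y)`,
and the subgradient inequality `G_k(ρ) ≥ G_k(𝔞_k) + c (ρ - 𝔞_k)` settles the last coordinate.
-/

open MeasureTheory

/-- Value-at-risk at level `α` of the loss `X`: the `α`-quantile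
`VaR_α(X) = inf {x : P(X ≤ x) ≥ α}`. -/
noncomputable def VaR {Ω : Type*} [MeasurableSpace Ω] (P : Measure Ω) (X : Ω → ℝ) (α : ℝ) : ℝ :=
  sInf {x : ℝ | α ≤ (P {ω | X ω ≤ x}).toReal}

/-- Conditional value-at-risk: `CVaR_α(X) = (1-α)⁻¹ ∫_α^1 VaR_u(X) du`. -/
noncomputable def CVaR {Ω : Type*} [MeasurableSpace Ω] (P : Measure Ω) (X : Ω → ℝ) (α : ℝ) : ℝ :=
  (1 - α)⁻¹ * ∫ u in α..1, VaR P X u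

/-- `q` is an `α`-quantile of `Y`: `P(Y < q) ≤ α ≤ P(Y ≤ q)`. -/
def IsQuantile {Ω : Type*} [MeasurableSpace Ω] (P : Measure Ω) (Y : Ω → ℝ) (α q : ℝ) : Prop :=
  (P {ω | Y ω < q}).toReal ≤ α ∧ α ≤ (P {ω | Y ω ≤ q}).toReal

open ProbabilityTheory Set Filter Topology

section Quantile

variable {Ω : Type*} [MeasurableSpace Ω] {P : Measure Ω} [IsProbabilityMeasure P] {Y : Ω → ℝ}
  {α q u : ℝ}

lemma cdf_map_apply (hYm : Measurable Y) (x : ℝ) :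
    cdf (P.map Y) x = (P {ω | Y ω ≤ x}).toReal := by
  have := Measure.isProbabilityMeasure_map (μ := P) hYm.aemeasurable
  rw [cdf_eq_real, map_measureReal_apply hYm measurableSet_Iic]
  rfl

lemma monotone_toReal_measure_le : Monotone fun x => (P {ω | Y ω ≤ x}).toReal :=
  fun _ _ hxy => measureReal_mono fun _ hω => le_trans hω hxy

lemma IsQuantile.le_of_le_measure (hq : IsQuantile P Y α q)
    (huniq : ∀ r, IsQuantile P Y α r → r = q) {x : ℝ} (hx : α ≤ (P {ω | Y ω ≤ x}).toReal) :
    q ≤ x := by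
  by_contra! hxq
  have hx' : IsQuantile P Y α x :=
    ⟨(measureReal_mono fun _ hω => lt_trans hω hxq).trans hq.1, hx⟩
  exact hxq.ne (huniq x hx')

lemma VaR_eq_of_isQuantile (hq : IsQuantile P Y α q)
    (huniq : ∀ r, IsQuantile P Y α r → r = q) : VaR P Y α = q :=
  le_antisymm (csInf_le ⟨q, fun _ => hq.le_of_le_measure huniq⟩ hq.2)
    (le_csInf ⟨q, hq.2⟩ fun _ => hq.le_of_le_measure huniq)

lemma VaR_le_iff (hYm : Measurable Y) (hq : IsQuantile P Y α q)
    (huniq : ∀ r, IsQuantile P Y α r → r = q) (hαu : α ≤ u) (hu : u < 1) (x : ℝ) :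
    VaR P Y u ≤ x ↔ u ≤ (P {ω | Y ω ≤ x}).toReal := by
  have hF := cdf_map_apply (P := P) hYm
  have hbdd : BddBelow {x : ℝ | u ≤ (P {ω | Y ω ≤ x}).toReal} :=
    ⟨q, fun _ hx => hq.le_of_le_measure huniq (hαu.trans hx)⟩
  have hne : {x : ℝ | u ≤ (P {ω | Y ω ≤ x}).toReal}.Nonempty := by
    obtain ⟨x, hx⟩ := ((tendsto_cdf_atTop (P.map Y)).eventually (lt_mem_nhds hu)).exists
    exact ⟨x, (hF x ▸ hx).le⟩
  refine ⟨fun h => ?_, fun h => csInf_le hbdd h⟩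
  suffices u ≤ cdf (P.map Y) (VaR P Y u) from (hF _ ▸ this).trans (monotone_toReal_measure_le h)
  have hright : Tendsto (cdf (P.map Y)) (𝓝[>] (VaR P Y u)) (𝓝 (cdf (P.map Y) (VaR P Y u))) :=
    ((cdf (P.map Y)).right_continuous _).mono Ioi_subset_Ici_self
  refine ge_of_tendsto hright (eventually_nhdsWithin_of_forall fun t ht => ?_)
  obtain ⟨x, hx, hxt⟩ := (csInf_lt_iff hbdd hne).1 ht
  exact hF t ▸ hx.trans (monotone_toReal_measure_le hxt.le)

lemma le_VaR (hYm : Measurable Y) (hq : IsQuantile P Y α q)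
    (huniq : ∀ r, IsQuantile P Y α r → r = q) (hαu : α ≤ u) (hu : u < 1) : q ≤ VaR P Y u :=
  hq.le_of_le_measure huniq <| hαu.trans <| (VaR_le_iff hYm hq huniq hαu hu _).1 le_rfl

lemma monotoneOn_VaR (hYm : Measurable Y) (hq : IsQuantile P Y α q)
    (huniq : ∀ r, IsQuantile P Y α r → r = q) : MonotoneOn (VaR P Y) (Ico α 1) :=
  fun _ hu _ hv huv => (VaR_le_iff hYm hq huniq hu.1 hu.2 _).2 <|
    huv.trans <| (VaR_le_iff hYm hq huniq hv.1 hv.2 _).1 le_rfl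

end Quantile

section CVaR

variable {Ω : Type*} [MeasurableSpace Ω] {P : Measure Ω} [IsProbabilityMeasure P] {Y : Ω → ℝ}
  {α q : ℝ}

/-- Fubini on `{(u, t) | F (q + t) < u}`, where `F` is the distribution function of `Y`:
the `t`-sections have length `VaR_u - q`, the `u`-sections have length `P (Y > q + t)`. -/
lemma lintegral_VaR_sub_eq (hYm : Measurable Y) (hq : IsQuantile P Y α q)
    (huniq : ∀ r, IsQuantile P Y α r → r = q) :
    ∫⁻ u in Ioo α 1, ENNReal.ofReal (VaR P Y u - q) = ∫⁻ t in Ioi 0, P {ω | q + t < Y ω} := by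
  set F : ℝ → ℝ := fun x => (P {ω | Y ω ≤ x}).toReal
  set E : Set (ℝ × ℝ) := {z | F (q + z.2) < z.1}
  have hF : Measurable F := monotone_toReal_measure_le.measurable
  have hE : MeasurableSet E :=
    measurableSet_lt (hF.comp (measurable_const.add measurable_snd)) measurable_fst
  calc ∫⁻ u in Ioo α 1, ENNReal.ofReal (VaR P Y u - q)
      = ∫⁻ u in Ioo α 1, volume.restrict (Ioi 0) (Prod.mk u ⁻¹' E) := by
        refine setLIntegral_congr_fun measurableSet_Ioo fun u hu => ?_
        have hsection : Prod.mk u ⁻¹' E ∩ Ioi 0 = Ioo 0 (VaR P Y u - q) := by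
          ext t
          simp only [E, mem_inter_iff, mem_preimage, mem_ofPred_eq, mem_Ioi, mem_Ioo, ← not_le,
            sub_le_iff_le_add', ← VaR_le_iff hYm hq huniq hu.1.le hu.2, F]
          exact and_comm
        rw [Measure.restrict_apply (hE.preimage measurable_prodMk_left), hsection,
          Real.volume_Ioo, sub_zero]
    _ = (volume.restrict (Ioo α 1)).prod (volume.restrict (Ioi 0)) E :=
        (Measure.prod_apply hE).symm
    _ = ∫⁻ t in Ioi 0, volume.restrict (Ioo α 1) ((·, t) ⁻¹' E) := Measure.prod_apply_symm hE
    _ = ∫⁻ t in Ioi 0, P {ω | q + t < Y ω} := by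
        refine setLIntegral_congr_fun measurableSet_Ioi fun t ht => ?_
        have hsection : (·, t) ⁻¹' E ∩ Ioo α 1 = Ioo (F (q + t)) 1 := by
          have hαF : α ≤ F (q + t) :=
            hq.2.trans (monotone_toReal_measure_le (le_add_of_nonneg_right (le_of_lt ht)))
          ext u
          simp only [E, mem_inter_iff, mem_preimage, mem_ofPred_eq, mem_Ioo]
          exact ⟨fun h => ⟨h.1, h.2.2⟩, fun h => ⟨h.1, hαF.trans_lt h.1, h.2⟩⟩
        have hcompl : {ω | q + t < Y ω} = {ω | Y ω ≤ q + t}ᶜ := by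
          ext; simp
        rw [Measure.restrict_apply (hE.preimage measurable_prodMk_right), hsection,
          Real.volume_Ioo, hcompl,
          prob_compl_eq_one_sub (s := {ω | Y ω ≤ q + t}) (hYm measurableSet_Iic),
          ENNReal.ofReal_sub _ ENNReal.toReal_nonneg, ENNReal.ofReal_one,
          ENNReal.ofReal_toReal (measure_ne_top _ _)]

lemma lintegral_measure_add_lt_eq (hYm : Measurable Y) (hY : Integrable Y P) (q : ℝ) :
    ∫⁻ t in Ioi 0, P {ω | q + t < Y ω} = ENNReal.ofReal (∫ ω, max (Y ω - q) 0 ∂P) := by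
  have hnn : 0 ≤ᵐ[P] fun ω => max (Y ω - q) 0 := ae_of_all _ fun _ => le_max_right _ _
  have hint : Integrable (fun ω => max (Y ω - q) 0) P := (hY.sub (integrable_const q)).pos_part
  rw [ofReal_integral_eq_lintegral_ofReal hint hnn,
    lintegral_eq_lintegral_meas_lt P hnn ((hYm.sub_const q).max measurable_const).aemeasurable]
  refine setLIntegral_congr_fun measurableSet_Ioi fun t ht => congrArg P ?_
  ext ω
  simp only [mem_ofPred_eq, lt_max_iff, not_lt_of_gt ht.out, or_false]
  constructor <;> intro h <;> linarith

lemma integral_VaR_eq (hYm : Measurable Y) (hY : Integrable Y P) (hα : α < 1)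
    (hq : IsQuantile P Y α q) (huniq : ∀ r, IsQuantile P Y α r → r = q) :
    ∫ u in α..1, VaR P Y u = (1 - α) * q + ∫ ω, max (Y ω - q) 0 ∂P := by
  have hnn : 0 ≤ᵐ[volume.restrict (Ioo α 1)] fun u => VaR P Y u - q :=
    ae_restrict_of_forall_mem measurableSet_Ioo fun u hu =>
      sub_nonneg.2 (le_VaR hYm hq huniq hu.1.le hu.2)
  have hmeas : AEStronglyMeasurable (fun u => VaR P Y u - q) (volume.restrict (Ioo α 1)) :=
    ((aemeasurable_restrict_of_monotoneOn measurableSet_Ioo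
      ((monotoneOn_VaR hYm hq huniq).mono Ioo_subset_Ico_self)).sub_const q).aestronglyMeasurable
  have hlint : ∫⁻ u in Ioo α 1, ENNReal.ofReal (VaR P Y u - q)
      = ENNReal.ofReal (∫ ω, max (Y ω - q) 0 ∂P) := by
    rw [lintegral_VaR_sub_eq hYm hq huniq, lintegral_measure_add_lt_eq hYm hY]
  have hint : IntegrableOn (fun u => VaR P Y u - q) (Ioo α 1) :=
    ⟨hmeas, (hasFiniteIntegral_iff_ofReal hnn).2 (hlint ▸ ENNReal.ofReal_lt_top)⟩
  have hEnn : 0 ≤ ∫ ω, max (Y ω - q) 0 ∂P := integral_nonneg fun _ => le_max_right _ _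
  calc ∫ u in α..1, VaR P Y u = ∫ u in Ioo α 1, ((VaR P Y u - q) + q) := by
        rw [intervalIntegral.integral_of_le hα.le, integral_Ioc_eq_integral_Ioo]
        simp
    _ = (1 - α) * q + ∫ ω, max (Y ω - q) 0 ∂P := by
        rw [integral_add hint (integrable_const q), integral_eq_lintegral_of_nonneg_ae hnn hmeas,
          hlint, ENNReal.toReal_ofReal hEnn]
        simp [hα.le, add_comm]

end CVaR

section QuantileScore

variable {Ω : Type*} [MeasurableSpace Ω] {P : Measure Ω} {Y : Ω → ℝ} {H : ℝ → ℝ} {α q : ℝ}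

noncomputable def quantileScore (α : ℝ) (H : ℝ → ℝ) (z y : ℝ) : ℝ :=
  ((if y ≤ z then 1 else 0) - α) * (H z - H y)

lemma quantileScore_sub_ge_of_le (hH : Monotone H) (α x q y : ℝ) :
    ((if y ≤ q then 1 else 0) - α) * (H x - H q) ≤
      quantileScore α H x y - quantileScore α H q y := by
  rcases le_or_gt y x with hyx | hxy
  · have := hH hyx
    unfold quantileScore; split_ifs <;> linarith
  · have := hH hxy.le
    unfold quantileScore; split_ifs <;> linarith

lemma quantileScore_sub_ge_of_lt (hH : Monotone H) (α x q y : ℝ) :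
    ((if y < q then 1 else 0) - α) * (H x - H q) ≤
      quantileScore α H x y - quantileScore α H q y := by
  rcases eq_or_ne y q with rfl | hyq
  · unfold quantileScore
    rcases le_or_gt y x with hyx | hxy
    · simp only [lt_irrefl, if_false, hyx, if_true, sub_self, mul_zero, sub_zero]
      linarith [hH hyx]
    · simp [hxy.not_ge]
  · rw [if_congr ⟨le_of_lt, (lt_of_le_of_ne · hyq)⟩ rfl rfl]
    exact quantileScore_sub_ge_of_le hH α x q y

lemma integrable_ite_sub_mul {p : Ω → Prop} [DecidablePred p] (hp : MeasurableSet {ω | p ω})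
    {f : Ω → ℝ} (hf : Integrable f P) (α : ℝ) :
    Integrable (fun ω => ((if p ω then 1 else 0) - α) * f ω) P := by
  refine hf.bdd_mul (c := 1 + |α|) ?_ (ae_of_all _ fun ω => ?_)
  · exact ((Measurable.ite hp measurable_const measurable_const).sub_const α).aestronglyMeasurable
  · refine (norm_sub_le _ _).trans ?_
    rw [Real.norm_eq_abs α]
    gcongr
    split_ifs <;> simp

variable [IsProbabilityMeasure P]

lemma integral_ite_sub_mul {p : Ω → Prop} [DecidablePred p] (hp : MeasurableSet {ω | p ω})
    (α c : ℝ) :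
    ∫ ω, ((if p ω then 1 else 0) - α) * c ∂P = ((P {ω | p ω}).toReal - α) * c := by
  have hind : (fun ω => (if p ω then (1 : ℝ) else 0)) = {ω | p ω}.indicator 1 := by
    ext ω; simp [Set.indicator_apply]
  rw [integral_mul_const, integral_sub (hind ▸ (integrable_const 1).indicator hp)
    (integrable_const α), hind, integral_indicator_one hp]
  simp [measureReal_def]

lemma integrable_quantileScore (hYm : Measurable Y) (hH : Integrable (fun ω => H (Y ω)) P)
    (α z : ℝ) : Integrable (fun ω => quantileScore α H z (Y ω)) P :=
  integrable_ite_sub_mul (hYm measurableSet_Iic) ((integrable_const _).sub hH) α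

lemma sub_mul_le_integral_quantileScore_sub (hYm : Measurable Y)
    (hH : Integrable (fun ω => H (Y ω)) P) {p : Ω → Prop} [DecidablePred p]
    (hp : MeasurableSet {ω | p ω}) {c x : ℝ}
    (hle : ∀ ω, ((if p ω then 1 else 0) - α) * c ≤
      quantileScore α H x (Y ω) - quantileScore α H q (Y ω)) :
    ((P {ω | p ω}).toReal - α) * c ≤
      ∫ ω, quantileScore α H x (Y ω) ∂P - ∫ ω, quantileScore α H q (Y ω) ∂P := by
  have hxint := integrable_quantileScore hYm hH α x
  have hqint := integrable_quantileScore hYm hH α q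
  rw [← integral_ite_sub_mul hp, ← integral_sub hxint hqint]
  exact integral_mono (integrable_ite_sub_mul hp (integrable_const c) α) (hxint.sub hqint) hle

lemma integral_quantileScore_le (hYm : Measurable Y) (hH : Monotone H)
    (hHint : Integrable (fun ω => H (Y ω)) P) (hq : IsQuantile P Y α q) (x : ℝ) :
    ∫ ω, quantileScore α H q (Y ω) ∂P ≤ ∫ ω, quantileScore α H x (Y ω) ∂P := by
  have hle := sub_mul_le_integral_quantileScore_sub (p := fun ω => Y ω ≤ q) hYm hHint
    (hYm measurableSet_Iic) fun ω => quantileScore_sub_ge_of_le hH α x q (Y ω)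
  have hlt := sub_mul_le_integral_quantileScore_sub (p := fun ω => Y ω < q) hYm hHint
    (hYm measurableSet_Iio) fun ω => quantileScore_sub_ge_of_lt hH α x q (Y ω)
  -- `P (Y < q) ≤ α ≤ P (Y ≤ q)`: one of the two bounds is nonnegative, by the sign of `H x - H q`
  rcases le_total (H q) (H x) with h | h
  · linarith [mul_nonneg (sub_nonneg.2 hq.2) (sub_nonneg.2 h)]
  · linarith [mul_nonneg_of_nonpos_of_nonpos (sub_nonpos.2 hq.1) (sub_nonpos.2 h)]

end QuantileScore

section SpectralScore

variable {Ω : Type*} [MeasurableSpace Ω] {P : Measure Ω} [IsProbabilityMeasure P] {Y : Ω → ℝ}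

lemma quantileScore_sub_mul_eq (α b : ℝ) (G : ℝ → ℝ) (z y : ℝ) :
    quantileScore α G z y - b * ((1 - α) * z + max (y - z) 0) =
      quantileScore α (fun t => G t - b * t) z y - b * (1 - α) * y := by
  unfold quantileScore
  split_ifs with h
  · rw [max_eq_right (by linarith)]; ring
  · rw [max_eq_left (by linarith)]; ring

lemma integral_quantileScore_sub_mul_eq (hYm : Measurable Y) (hY : Integrable Y P) {G : ℝ → ℝ}
    (hG : Integrable (fun ω => G (Y ω)) P) (α b z : ℝ) :
    ∫ ω, quantileScore α G z (Y ω) ∂P - b * ((1 - α) * z + ∫ ω, max (Y ω - z) 0 ∂P) =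
      ∫ ω, quantileScore α (fun t => G t - b * t) z (Y ω) ∂P - b * (1 - α) * ∫ ω, Y ω ∂P := by
  have hmax : Integrable (fun ω => max (Y ω - z) 0) P := (hY.sub (integrable_const z)).pos_part
  have htail : Integrable (fun ω => b * ((1 - α) * z + max (Y ω - z) 0)) P :=
    ((integrable_const _).add hmax).const_mul b
  have hGb : Integrable (fun ω => G (Y ω) - b * Y ω) P := hG.sub (hY.const_mul b)
  have hbY : Integrable (fun ω => b * (1 - α) * Y ω) P := hY.const_mul _
  calc ∫ ω, quantileScore α G z (Y ω) ∂P - b * ((1 - α) * z + ∫ ω, max (Y ω - z) 0 ∂P)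
      = ∫ ω, (quantileScore α G z (Y ω) - b * ((1 - α) * z + max (Y ω - z) 0)) ∂P := by
        rw [integral_sub (integrable_quantileScore hYm hG α z) htail, integral_const_mul,
          integral_add (integrable_const _) hmax, integral_const]
        simp
    _ = ∫ ω, (quantileScore α (fun t => G t - b * t) z (Y ω) - b * (1 - α) * Y ω) ∂P := by
        simp only [quantileScore_sub_mul_eq]
    _ = _ := by
        rw [integral_sub (integrable_quantileScore hYm hGb α z) hbY, integral_const_mul]

lemma integral_quantileScore_sub_mul_le (hYm : Measurable Y) (hY : Integrable Y P) {G : ℝ → ℝ}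
    (hG : Integrable (fun ω => G (Y ω)) P) {α b q : ℝ} (hmono : Monotone fun t => G t - b * t)
    (hq : IsQuantile P Y α q) (x : ℝ) :
    ∫ ω, quantileScore α G q (Y ω) ∂P - b * ((1 - α) * q + ∫ ω, max (Y ω - q) 0 ∂P) ≤
      ∫ ω, quantileScore α G x (Y ω) ∂P - b * ((1 - α) * x + ∫ ω, max (Y ω - x) 0 ∂P) := by
  rw [integral_quantileScore_sub_mul_eq hYm hY hG, integral_quantileScore_sub_mul_eq hYm hY hG]
  gcongr ?_ - _
  exact integral_quantileScore_le hYm hmono (hG.sub (hY.const_mul b)) hq x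

lemma integral_spectralScore_eq (hYm : Measurable Y) (hY : Integrable Y P) {K : Finset ℕ}
    {α p : ℕ → ℝ} {G : ℕ → ℝ → ℝ} {g : ℝ → ℝ}
    (hG : ∀ m ∈ K, Integrable (fun ω => G m (Y ω)) P) (hg : Integrable (fun ω => g (Y ω)) P)
    (v : ℕ → ℝ) (z c : ℝ) :
    ∫ ω, ((∑ m ∈ K, ((if Y ω ≤ v m then (1:ℝ) else 0) - α m) * (G m (v m) - G m (Y ω)))
        - g z + g (Y ω)
        + c * (z + ∑ m ∈ K, p m / (1 - α m) * (((if v m < Y ω then (1:ℝ) else 0) - (1 - α m)) * v m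
          - (if v m < Y ω then (1:ℝ) else 0) * Y ω))) ∂P =
      ∑ m ∈ K, ∫ ω, quantileScore (α m) (G m) (v m) (Y ω) ∂P
        - c * ∑ m ∈ K, p m / (1 - α m) * ((1 - α m) * v m + ∫ ω, max (Y ω - v m) 0 ∂P)
        + (∫ ω, g (Y ω) ∂P - g z + c * z) := by
  have htail : ∀ β z y : ℝ, ((if z < y then (1:ℝ) else 0) - β) * z - (if z < y then 1 else 0) * y
      = -(β * z + max (y - z) 0) := by
    intro β z y
    split_ifs with h
    · rw [max_eq_left (by linarith)]; ring
    · rw [max_eq_right (by linarith)]; ring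
  have hmax : ∀ m, Integrable (fun ω => max (Y ω - v m) 0) P :=
    fun m => (hY.sub (integrable_const _)).pos_part
  have htail_m : ∀ m, Integrable
      (fun ω => p m / (1 - α m) * ((1 - α m) * v m + max (Y ω - v m) 0)) P :=
    fun m => ((integrable_const _).add (hmax m)).const_mul _
  have hscore : Integrable (fun ω => ∑ m ∈ K, quantileScore (α m) (G m) (v m) (Y ω)) P :=
    integrable_finsetSum K fun m hm => integrable_quantileScore hYm (hG m hm) _ _
  have htails : Integrable (fun ω =>
      c * ∑ m ∈ K, p m / (1 - α m) * ((1 - α m) * v m + max (Y ω - v m) 0)) P :=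
    (integrable_finsetSum K fun m _ => htail_m m).const_mul c
  have hscore_tails : Integrable (fun ω => ∑ m ∈ K, quantileScore (α m) (G m) (v m) (Y ω)
      - c * ∑ m ∈ K, p m / (1 - α m) * ((1 - α m) * v m + max (Y ω - v m) 0)) P :=
    hscore.sub htails
  have hgz : Integrable (fun ω => g (Y ω) - g z) P := hg.sub (integrable_const _)
  have hrest : Integrable (fun ω => g (Y ω) - g z + c * z) P := hgz.add (integrable_const _)
  have hintegral_tails : ∫ ω, ∑ m ∈ K, p m / (1 - α m) * ((1 - α m) * v m + max (Y ω - v m) 0) ∂P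
      = ∑ m ∈ K, p m / (1 - α m) * ((1 - α m) * v m + ∫ ω, max (Y ω - v m) 0 ∂P) := by
    rw [integral_finsetSum K fun m _ => htail_m m]
    refine Finset.sum_congr rfl fun m _ => ?_
    rw [integral_const_mul, integral_add (integrable_const _) (hmax m), integral_const]
    simp
  calc _ = ∫ ω, (∑ m ∈ K, quantileScore (α m) (G m) (v m) (Y ω)
        - c * ∑ m ∈ K, p m / (1 - α m) * ((1 - α m) * v m + max (Y ω - v m) 0)
        + (g (Y ω) - g z + c * z)) ∂P := by
        congr 1; ext ω
        simp only [htail, quantileScore, mul_neg, Finset.sum_neg_distrib]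
        ring
    _ = _ := by
        rw [integral_add hscore_tails hrest, integral_sub hscore htails, integral_const_mul,
          integral_finsetSum K fun m hm => integrable_quantileScore hYm (hG m hm) _ _,
          hintegral_tails, integral_add hgz (integrable_const _),
          integral_sub hg (integrable_const _)]
        simp

end SpectralScore

theorem spectral_score_consistent_general {Ω : Type*} [MeasurableSpace Ω] (P : Measure Ω)
    [IsProbabilityMeasure P] (k : ℕ) (hk : 2 ≤ k)
    (α p : ℕ → ℝ)
    (hα1 : α (k - 1) < 1)
    (hαmono : ∀ m : ℕ, 1 ≤ m → m + 1 ≤ k - 1 → α m < α (m + 1))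
    (Y : Ω → ℝ) (hYm : Measurable Y) (hY : Integrable Y P)
    (huniq : ∀ m ∈ Finset.Icc 1 (k - 1), ∃! q : ℝ, IsQuantile P Y (α m) q)
    (G : ℕ → ℝ → ℝ) (Gk' : ℝ → ℝ)
    -- G k is convex with subgradient Gk'
    (hGk : ∀ x y : ℝ, G k x + Gk' x * (y - x) ≤ G k y)
    -- for every 𝔞_k and each m, the map x ↦ G_m(x) − (x p_m/(1−α_m)) G_k'(𝔞_k) is increasing
    (hGm : ∀ ak : ℝ, ∀ m ∈ Finset.Icc 1 (k - 1),
      Monotone (fun x => G m x - x * p m / (1 - α m) * Gk' ak))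
    (hGint : ∀ m ∈ Finset.Icc 1 k, Integrable (fun ω => G m (Y ω)) P)
    (S : (ℕ → ℝ) → ℝ → ℝ)
    (hS : ∀ (a : ℕ → ℝ) (y : ℝ), S a y =
      (∑ m ∈ Finset.Icc 1 (k - 1),
        ((if y ≤ a m then (1:ℝ) else 0) - α m) * (G m (a m) - G m y))
      - G k (a k) + G k y
      + Gk' (a k) * (a k + ∑ m ∈ Finset.Icc 1 (k - 1),
          p m / (1 - α m) * (((if a m < y then (1:ℝ) else 0) - (1 - α m)) * a m
            - (if a m < y then (1:ℝ) else 0) * y)))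
    (M : ℕ → ℝ)
    (hMvar : ∀ m ∈ Finset.Icc 1 (k - 1), M m = VaR P Y (α m))
    (hMspec : M k = ∑ m ∈ Finset.Icc 1 (k - 1), p m * CVaR P Y (α m)) :
    ∀ a : ℕ → ℝ, (∀ m : ℕ, 1 ≤ m → m + 1 ≤ k - 1 → a m ≤ a (m + 1)) →
      ∫ ω, S M (Y ω) ∂P ≤ ∫ ω, S a (Y ω) ∂P := by
  intro a _
  have hα : ∀ m ∈ Finset.Icc 1 (k - 1), α m < 1 := by
    have hαle : MonotoneOn α (Icc 1 (k - 1)) := monotoneOn_of_le_succ ordConnected_Icc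
      fun m _ hm hm' => (hαmono m hm.1 (by simpa using hm'.2)).le
    intro m hm
    rw [Finset.mem_Icc] at hm
    exact (hαle hm ⟨hm.1.trans hm.2, le_rfl⟩ hm.2).trans_lt hα1
  have hquant : ∀ m ∈ Finset.Icc 1 (k - 1),
      IsQuantile P Y (α m) (M m) ∧ ∀ r, IsQuantile P Y (α m) r → r = M m := by
    intro m hm
    obtain ⟨q, hq, huq⟩ := huniq m hm
    rw [hMvar m hm, VaR_eq_of_isQuantile hq huq]
    exact ⟨hq, huq⟩
  have hGm_int : ∀ m ∈ Finset.Icc 1 (k - 1), Integrable (fun ω => G m (Y ω)) P :=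
    fun m hm => hGint m (Finset.Icc_subset_Icc_right (Nat.sub_le k 1) hm)
  have hGk_int : Integrable (fun ω => G k (Y ω)) P := hGint k (Finset.mem_Icc.2 ⟨by omega, le_rfl⟩)
  have hspectral : ∑ m ∈ Finset.Icc 1 (k - 1),
      p m / (1 - α m) * ((1 - α m) * M m + ∫ ω, max (Y ω - M m) 0 ∂P) = M k := by
    rw [hMspec]
    refine Finset.sum_congr rfl fun m hm => ?_
    rw [CVaR, integral_VaR_eq hYm hY (hα m hm) (hquant m hm).1 (hquant m hm).2]
    field_simp [(sub_pos.2 (hα m hm)).ne']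
  have hsummands := Finset.sum_le_sum fun m hm =>
    integral_quantileScore_sub_mul_le hYm hY (hGm_int m hm) (b := Gk' (a k) * (p m / (1 - α m)))
      (by convert hGm (a k) m hm using 2; ring) (hquant m hm).1 (a m)
  simp only [Finset.sum_sub_distrib, mul_assoc, ← Finset.mul_sum, hspectral] at hsummands
  simp only [hS]
  rw [integral_spectralScore_eq hYm hY hGm_int hGk_int,
    integral_spectralScore_eq hYm hY hGm_int hGk_int, hspectral]
  linarith [hGk (a k) (M k)]

/-- Fissler–Ziegel scoring functions for spectral risk measures with finitely supported
spectrum: consistency for `(VaR_{α₁}, …, VaR_{α_{k−1}}, ρ^φ)`. -/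
theorem spectral_score_consistent {Ω : Type*} [MeasurableSpace Ω] (P : Measure Ω)
    [IsProbabilityMeasure P] (k : ℕ) (hk : 2 ≤ k)
    (α p : ℕ → ℝ)
    (hα0 : 0 < α 1) (hα1 : α (k - 1) < 1)
    (hαmono : ∀ m : ℕ, 1 ≤ m → m + 1 ≤ k - 1 → α m < α (m + 1))
    (hp : ∀ m ∈ Finset.Icc 1 (k - 1), p m ∈ Set.Ioc (0:ℝ) 1)
    (hpsum : ∑ m ∈ Finset.Icc 1 (k - 1), p m = 1)
    (Y : Ω → ℝ) (hYm : Measurable Y) (hY : Integrable Y P)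
    (huniq : ∀ m ∈ Finset.Icc 1 (k - 1), ∃! q : ℝ, IsQuantile P Y (α m) q)
    (G : ℕ → ℝ → ℝ) (Gk' : ℝ → ℝ)
    -- G k is convex with subgradient Gk'
    (hGk : ∀ x y : ℝ, G k x + Gk' x * (y - x) ≤ G k y)
    -- for every 𝔞_k and each m, the map x ↦ G_m(x) − (x p_m/(1−α_m)) G_k'(𝔞_k) is increasing
    (hGm : ∀ ak : ℝ, ∀ m ∈ Finset.Icc 1 (k - 1),
      Monotone (fun x => G m x - x * p m / (1 - α m) * Gk' ak))
    (hGint : ∀ m ∈ Finset.Icc 1 k, Integrable (fun ω => G m (Y ω)) P)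
    (S : (ℕ → ℝ) → ℝ → ℝ)
    (hS : ∀ (a : ℕ → ℝ) (y : ℝ), S a y =
      (∑ m ∈ Finset.Icc 1 (k - 1),
        ((if y ≤ a m then (1:ℝ) else 0) - α m) * (G m (a m) - G m y))
      - G k (a k) + G k y
      + Gk' (a k) * (a k + ∑ m ∈ Finset.Icc 1 (k - 1),
          p m / (1 - α m) * (((if a m < y then (1:ℝ) else 0) - (1 - α m)) * a m
            - (if a m < y then (1:ℝ) else 0) * y)))
    (M : ℕ → ℝ)
    (hMvar : ∀ m ∈ Finset.Icc 1 (k - 1), M m = VaR P Y (α m))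
    (hMspec : M k = ∑ m ∈ Finset.Icc 1 (k - 1), p m * CVaR P Y (α m)) :
    ∀ a : ℕ → ℝ, (∀ m : ℕ, 1 ≤ m → m + 1 ≤ k - 1 → a m ≤ a (m + 1)) →
      ∫ ω, S M (Y ω) ∂P ≤ ∫ ω, S a (Y ω) ∂P :=
  spectral_score_consistent_general P k hk α p hα1 hαmono Y hYm hY huniq G Gk' hGk hGm hGint S hS M
    hMvar hMspec
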